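/- If θ is uniform on [0,1] and the pooling region [θ_B, 1] is partitioned into pools with the deceivee responding with the pool midpoint ā_j = (θ_j + θ_{j+1})/2, then the boundary consistency condition C^A(ā_j, θ_{j+1}) = C^A(ā_{j+1}, θ_{j+1}) with C^A(a,θ) = (a − (θ+b))² is equivalent to the recursion θ_{j+2} = θ_{j+1} + (θ_{j+1} − θ_j) + 4b. -/
import Mathlib


/-- With uniform prior and midpoint responses `ā_j = (θ_j + θ_{j+1})/2`, the
boundary consistency condition `C^A(ā_j, θ_{j+1}) = C^A(ā_{j+1}, θ_{j+1})` with
`C^A(a, θ) = (a − (θ + b))²` is equivalent to the pool recursion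
`θ_{j+2} = θ_{j+1} + (θ_{j+1} − θ_j) + 4b`. -/
theorem boundary_consistency_iff_recursion (b θj θj1 θj2 : ℝ)
    (hb : 0 < b) (h1 : θj < θj1) (h2 : θj1 < θj2) :
    ((θj + θj1) / 2 - (θj1 + b))^2 = ((θj1 + θj2) / 2 - (θj1 + b))^2 ↔
      θj2 = θj1 + (θj1 - θj) + 4 * b := by
  constructor
  · intro h
    have hfac : (((θj + θj1) / 2 - (θj1 + b)) - ((θj1 + θj2) / 2 - (θj1 + b))) *
        (((θj + θj1) / 2 - (θj1 + b)) + ((θj1 + θj2) / 2 - (θj1 + b))) = 0 := by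
      linear_combination h
    rcases mul_eq_zero.1 hfac with h0 | h0
    · linarith
    · linarith
  · intro h
    rw [h]; ring
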